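/- Let A and A' be symmetric matrices with nonnegative entries on a finite vertex set V of size n, having identical strictly positive degrees d_i = Σ_j A[i,j] = Σ_j A'[i,j] > 0. Let C and C' be partitions of V into k blocks each, all blocks having strictly positive volume with respect to d, and let H and H' be their normalized indicator matrices: H[i,m] = √d_i/√vol(C_m) if i ∈ C_m and 0 otherwise (similarly for H' with C'). Then the degree-normalized pairwise distances satisfy PD(A, H) − PD(A', H') = 2 · ( Σ_{m=1}^{k} N_asso(C'_m | A') − Σ_{m=1}^{k} N_asso(C_m | A) ), where PD(M, U) = Σ_{i,j∈V} M[i,j] · ‖U_{i,·}/√d_i − U_{j,·}/√d_j‖². -/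

import Mathlib

/-!
Dividing row `i` of the indicator matrix by `√dᵢ` leaves `e_{C(i)} / √vol(C(i))`, so the summand
of `PD(M, H)` is `M[i,j] · (1/vol C(i) + 1/vol C(j))` when `i, j` lie in different blocks and `0`
otherwise. The row and column sums of a symmetric `M` are the degrees, and
`∑ᵢ dᵢ / vol(C(i)) = k`, hence `PD(M, H) = 2k - 2 ∑ₘ N_asso(Cₘ | M)`. For `A` and `A'` the two
`2k` cancel because both have the degrees `d`.
-/

open Finset Matrix

/-- Degree of vertex `i`: `d_i = ∑_j M[i,j]`. -/
noncomputable def deg {V : Type*} [Fintype V] (M : V → V → ℝ) (i : V) : ℝ :=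
  ∑ j, M i j

/-- `assoc(S, T | M) = ∑_{s∈S, t∈T} M[s,t]`. -/
noncomputable def assoc {V : Type*} (M : V → V → ℝ) (S T : Finset V) : ℝ :=
  ∑ s ∈ S, ∑ t ∈ T, M s t

/-- The block of the partition (given by the labelling `cl`) with label `m`. -/
def block {V ι : Type*} [Fintype V] [DecidableEq ι] (cl : V → ι) (m : ι) : Finset V :=
  univ.filter fun i => cl i = m

/-- Volume of a set of vertices with respect to the degrees `d`. -/
noncomputable def vol {V : Type*} (d : V → ℝ) (S : Finset V) : ℝ :=
  ∑ i ∈ S, d i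

/-- Normalized association `N_asso(C_m | M) = assoc(C_m, C_m | M) / vol(C_m)`. -/
noncomputable def Nasso {V ι : Type*} [Fintype V] [DecidableEq ι]
    (d : V → ℝ) (M : V → V → ℝ) (cl : V → ι) (m : ι) : ℝ :=
  assoc M (block cl m) (block cl m) / vol d (block cl m)

/-- The normalized indicator matrix `H` of a partition:
`H[i,m] = √d_i / √vol(C_m)` if `i ∈ C_m`, else `0`. -/
noncomputable def indMat {V : Type*} [Fintype V] [DecidableEq V] {k : ℕ}
    (d : V → ℝ) (cl : V → Fin k) : Matrix V (Fin k) ℝ :=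
  Matrix.of fun i m =>
    if cl i = m then Real.sqrt (d i) / Real.sqrt (vol d (block cl m)) else 0

/-- Degree-normalized pairwise distance
`PD(M, U) = ∑_{i,j} M[i,j] · ‖U_{i,·}/√d_i − U_{j,·}/√d_j‖²`. -/
noncomputable def PD {V : Type*} [Fintype V] {k : ℕ}
    (d : V → ℝ) (M : V → V → ℝ) (U : Matrix V (Fin k) ℝ) : ℝ :=
  ∑ i, ∑ j, M i j *
    ‖(show EuclideanSpace ℝ (Fin k) from WithLp.toLp 2
        fun m => U i m / Real.sqrt (d i) - U j m / Real.sqrt (d j))‖ ^ 2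

section

variable {V ι : Type*} [Fintype V] [Fintype ι] [DecidableEq ι]

lemma sum_sub_ite_sq (f : ι → ℝ) (c c' : ι) :
    ∑ m, ((if c = m then f m else 0) - (if c' = m then f m else 0)) ^ 2
      = f c ^ 2 + f c' ^ 2 - 2 * (if c = c' then f c ^ 2 else 0) := by
  have expand : ∀ m, ((if c = m then f m else 0) - (if c' = m then f m else 0)) ^ 2
      = (if c = m then f m ^ 2 else 0) + (if c' = m then f m ^ 2 else 0)
        - 2 * (if c = m then (if c = c' then f m ^ 2 else 0) else 0) := by
    intro m
    split_ifs <;> subst_vars <;> first | contradiction | ring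
  simp only [expand, sum_sub_distrib, sum_add_distrib, ← mul_sum, sum_ite_eq, mem_univ, if_true]

lemma sum_mul_inv_vol_block (d : V → ℝ) (cl : V → ι) (hvol : ∀ m, vol d (block cl m) ≠ 0) :
    ∑ i, d i * (vol d (block cl (cl i)))⁻¹ = Fintype.card ι := by
  rw [← sum_fiberwise univ cl]
  have fiber : ∀ m, ∑ i with cl i = m, d i * (vol d (block cl (cl i)))⁻¹ = 1 := by
    intro m
    rw [sum_congr rfl fun i hi => by rw [(mem_filter.mp hi).2], ← sum_mul]
    exact mul_inv_cancel₀ (hvol m)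
  simp only [fiber, sum_const, card_univ, nsmul_eq_mul, mul_one]

lemma sum_sum_ite_eq_sum_Nasso (d : V → ℝ) (M : V → V → ℝ) (cl : V → ι) :
    ∑ i, ∑ j, M i j * (if cl i = cl j then (vol d (block cl (cl i)))⁻¹ else 0)
      = ∑ m, Nasso d M cl m := by
  rw [← sum_fiberwise univ cl]
  refine sum_congr rfl fun m _ => ?_
  rw [Nasso, assoc, div_eq_mul_inv, sum_mul]
  refine sum_congr rfl fun i hi => ?_
  rw [(mem_filter.mp hi).2, block, sum_filter, sum_mul]
  exact sum_congr rfl fun j _ => by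
    rw [mul_ite, ite_mul, mul_zero, zero_mul]; exact if_congr eq_comm rfl rfl

end

section

variable {V : Type*} [Fintype V] [DecidableEq V] {k : ℕ}

lemma indMat_div_sqrt {d : V → ℝ} (cl : V → Fin k) {i : V} (hi : 0 < d i) (m : Fin k) :
    indMat d cl i m / Real.sqrt (d i)
      = if cl i = m then (Real.sqrt (vol d (block cl m)))⁻¹ else 0 := by
  have : Real.sqrt (d i) ≠ 0 := (Real.sqrt_pos.mpr hi).ne'
  simp only [indMat, of_apply]
  split_ifs
  · field_simp
  · simp

lemma norm_sq_indMat_row_sub {d : V → ℝ} (cl : V → Fin k) (hd : ∀ i, 0 < d i)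
    (hvol : ∀ m, 0 ≤ vol d (block cl m)) (i j : V) :
    ‖(show EuclideanSpace ℝ (Fin k) from WithLp.toLp 2
        fun m => indMat d cl i m / Real.sqrt (d i) - indMat d cl j m / Real.sqrt (d j))‖ ^ 2
      = (vol d (block cl (cl i)))⁻¹ + (vol d (block cl (cl j)))⁻¹
        - 2 * (if cl i = cl j then (vol d (block cl (cl i)))⁻¹ else 0) := by
  rw [EuclideanSpace.real_norm_sq_eq]
  simp only [indMat_div_sqrt cl (hd _)]
  rw [sum_sub_ite_sq]
  simp only [inv_pow, Real.sq_sqrt (hvol _)]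

lemma PD_indMat {d : V → ℝ} (M : V → V → ℝ) (cl : V → Fin k) (hsym : ∀ i j, M i j = M j i)
    (hdeg : ∀ i, deg M i = d i) (hd : ∀ i, 0 < d i) (hvol : ∀ m, 0 < vol d (block cl m)) :
    PD d M (indMat d cl) = 2 * k - 2 * ∑ m, Nasso d M cl m := by
  have row_sum : ∀ i, ∑ j, M i j = d i := hdeg
  have col_sum : ∀ j, ∑ i, M i j = d j := fun j => by simp only [hsym _ j, row_sum]
  have card_eq : ∑ i, d i * (vol d (block cl (cl i)))⁻¹ = k := by
    rw [sum_mul_inv_vol_block d cl fun m => (hvol m).ne', Fintype.card_fin]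
  have left_sum : ∑ i, ∑ j, M i j * (vol d (block cl (cl i)))⁻¹ = k := by
    simp only [← sum_mul, row_sum, card_eq]
  have right_sum : ∑ i, ∑ j, M i j * (vol d (block cl (cl j)))⁻¹ = k := by
    rw [sum_comm]
    simp only [← sum_mul, col_sum, card_eq]
  unfold PD
  simp only [norm_sq_indMat_row_sub cl hd (fun m => (hvol m).le), mul_sub, mul_add,
    sum_sub_distrib, sum_add_distrib, mul_left_comm _ (2 : ℝ), ← mul_sum]
  rw [left_sum, right_sum, sum_sum_ite_eq_sum_Nasso]
  ring

end

theorem stmt17_general {V : Type*} [Fintype V] [DecidableEq V] {k : ℕ}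
    (A A' : V → V → ℝ)
    (hsym : ∀ i j, A i j = A j i) (hsym' : ∀ i j, A' i j = A' j i)
    (hdeq : ∀ i, deg A i = deg A' i) (hd : ∀ i, 0 < deg A i)
    (cl cl' : V → Fin k)
    (hvol : ∀ m : Fin k, 0 < vol (deg A) (block cl m))
    (hvol' : ∀ m : Fin k, 0 < vol (deg A) (block cl' m)) :
    PD (deg A) A (indMat (deg A) cl) - PD (deg A) A' (indMat (deg A) cl')
      = 2 * ((∑ m : Fin k, Nasso (deg A) A' cl' m)
              - (∑ m : Fin k, Nasso (deg A) A cl m)) := by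
  rw [PD_indMat A cl hsym (fun _ => rfl) hd hvol,
    PD_indMat A' cl' hsym' (fun i => (hdeq i).symm) hd hvol']
  ring

theorem stmt17 {V : Type*} [Fintype V] [DecidableEq V] {k : ℕ}
    (A A' : V → V → ℝ)
    (hsym : ∀ i j, A i j = A j i) (hsym' : ∀ i j, A' i j = A' j i)
    (hnn : ∀ i j, 0 ≤ A i j) (hnn' : ∀ i j, 0 ≤ A' i j)
    (hdeq : ∀ i, deg A i = deg A' i) (hd : ∀ i, 0 < deg A i)
    (cl cl' : V → Fin k)
    (hpart : Function.Surjective cl) (hpart' : Function.Surjective cl')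
    (hvol : ∀ m : Fin k, 0 < vol (deg A) (block cl m))
    (hvol' : ∀ m : Fin k, 0 < vol (deg A) (block cl' m)) :
    PD (deg A) A (indMat (deg A) cl) - PD (deg A) A' (indMat (deg A) cl')
      = 2 * ((∑ m : Fin k, Nasso (deg A) A' cl' m)
              - (∑ m : Fin k, Nasso (deg A) A cl m)) :=
  stmt17_general A A' hsym hsym' hdeq hd cl cl' hvol hvol'
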